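/- arXiv:2511.17002 — 2 statements merged into one kernel-verified Lean document; each statement's English description precedes it below -/
import Mathlib

section
/- Assume λ > 0, τ ∈ (0,1) and ρ = Υ = ((τ+1)/(2τ))(λτ)^{1/(τ+1)}, and set ϖ2 = −(λτ)^{1/(τ+1)}. Define Φ(r) = r^{−ϖ2}(log(1/r))^{2/(1+τ)} for r ∈ (0,1). Then there exists r_* ∈ (0,1) such that for all r ∈ (0, r_*): Φ'(r) > 0 and L_{ρ,λ,τ}[Φ](r) ≤ 0. -/
/-! Write `m = (λτ)^{1/(τ+1)}`, `β = 2/(1+τ)` and `A = -log r`, so that `Φ = r^m A^β` and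
`L[Φ] = r^{m-2} A^{β-2} (m(m-1)A² - β(2m-1)A + β(β-1) + (1-2ρ)A(mA-β) + λA^{1+τ}(mA-β)^{1-τ})`.
Near `0` the quantity `x = β/(mA)` lies in `[0,1]`, and `λ m^{1-τ} = m²/τ` turns the last term into
`(m²/τ) A² (1-x)^{1-τ}`. Bounding `(1-x)^{1-τ}` by its second-order Taylor polynomial at `0`
(valid for `x ≥ 0`, as the third derivative is negative) leaves a polynomial in `A` whose three
coefficients vanish exactly because `ρ = Υ` and `β = 2/(1+τ)`. -/

open MeasureTheory Filter Topology Real RealInnerProductSpace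

noncomputable section

/-- The gradient factor `G_τ(x,z,ξ) = z^τ ‖ξ‖^(1-τ) / ‖x‖^(τ+1)`.
For `τ = 0` this equals `‖ξ‖ / ‖x‖`, since `z ^ (0:ℝ) = 1` for real powers. -/
def Gt {N : ℕ} (τ : ℝ) (x : EuclideanSpace ℝ (Fin N)) (z : ℝ)
    (ξ : EuclideanSpace ℝ (Fin N)) : ℝ :=
  z ^ τ * ‖ξ‖ ^ (1 - τ) / ‖x‖ ^ (τ + 1)

/-- Test functions: `C¹` functions with compact support contained in `Ω \ {0}`. -/
def IsTestFun {N : ℕ} (Ω : Set (EuclideanSpace ℝ (Fin N)))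
    (φ : EuclideanSpace ℝ (Fin N) → ℝ) : Prop :=
  ContDiff ℝ 1 φ ∧ HasCompactSupport φ ∧ tsupport φ ⊆ Ω \ {0}

/-- The distributional pairing of equation (E) with a test function `φ`:
`∫ ∇u·∇φ + (N-2+2ρ) ∫ ((x·∇u)/|x|²) φ - λ ∫ G_τ(x,u,∇u) φ + ∫ |x|^θ u^q φ`. -/
def weakE (N : ℕ) (ρ lam τ θ q : ℝ) (Ω : Set (EuclideanSpace ℝ (Fin N)))
    (u φ : EuclideanSpace ℝ (Fin N) → ℝ) : ℝ :=
  (∫ x in Ω \ {0}, ⟪gradient u x, gradient φ x⟫)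
    + ((N : ℝ) - 2 + 2 * ρ) * (∫ x in Ω \ {0}, ⟪x, gradient u x⟫ / ‖x‖ ^ 2 * φ x)
    - lam * (∫ x in Ω \ {0}, Gt τ x (u x) (gradient u x) * φ x)
    + ∫ x in Ω \ {0}, ‖x‖ ^ θ * u x ^ q * φ x

/-- A positive `C¹` function on `Ω \ {0}`. -/
def PosC1 {N : ℕ} (Ω : Set (EuclideanSpace ℝ (Fin N)))
    (u : EuclideanSpace ℝ (Fin N) → ℝ) : Prop :=
  ContDiffOn ℝ 1 u (Ω \ {0}) ∧ ∀ x ∈ Ω \ {0}, 0 < u x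

/-- Positive distributional solution of equation (E) in `Ω \ {0}`. -/
def IsSolutionE (N : ℕ) (ρ lam τ θ q : ℝ) (Ω : Set (EuclideanSpace ℝ (Fin N)))
    (u : EuclideanSpace ℝ (Fin N) → ℝ) : Prop :=
  PosC1 Ω u ∧ ∀ φ, IsTestFun Ω φ → weakE N ρ lam τ θ q Ω u φ = 0

/-- Positive sub-solution of equation (E) in `Ω \ {0}`. -/
def IsSubSolutionE (N : ℕ) (ρ lam τ θ q : ℝ) (Ω : Set (EuclideanSpace ℝ (Fin N)))
    (u : EuclideanSpace ℝ (Fin N) → ℝ) : Prop :=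
  PosC1 Ω u ∧ ∀ φ, IsTestFun Ω φ → (∀ x, 0 ≤ φ x) → weakE N ρ lam τ θ q Ω u φ ≤ 0

/-- Positive super-solution of equation (E) in `Ω \ {0}`. -/
def IsSuperSolutionE (N : ℕ) (ρ lam τ θ q : ℝ) (Ω : Set (EuclideanSpace ℝ (Fin N)))
    (u : EuclideanSpace ℝ (Fin N) → ℝ) : Prop :=
  PosC1 Ω u ∧ ∀ φ, IsTestFun Ω φ → (∀ x, 0 ≤ φ x) → 0 ≤ weakE N ρ lam τ θ q Ω u φ

/-- `f_ρ(t) = t (t + 2ρ) + λ |t|^(1-τ)`. -/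
def fRho (ρ lam τ t : ℝ) : ℝ := t * (t + 2 * ρ) + lam * |t| ^ (1 - τ)

/-- `Υ = ((τ+1)/(2τ)) (λτ)^(1/(τ+1))`. -/
def Upsilon (lam τ : ℝ) : ℝ := ((τ + 1) / (2 * τ)) * (lam * τ) ^ (1 / (τ + 1))

/-- Case [N₀]: (a) `τ = 0` and `λ ≥ 2ρ`, or (b) `λ > 0`, `τ ∈ (0,1)` and `ρ < Υ`. -/
def CaseN0 (ρ lam τ : ℝ) : Prop :=
  (τ = 0 ∧ 2 * ρ ≤ lam) ∨ (0 < lam ∧ 0 < τ ∧ τ < 1 ∧ ρ < Upsilon lam τ)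

/-- Case [N₁]: (a) `τ = 0` and `λ < 2ρ`, or (b) `λ < 0` and `τ ∈ (0,1)`. -/
def CaseN1 (ρ lam τ : ℝ) : Prop :=
  (τ = 0 ∧ lam < 2 * ρ) ∨ (lam < 0 ∧ 0 < τ ∧ τ < 1)

/-- Case [N₂]: `λ > 0`, `τ ∈ (0,1)` and `ρ ≥ Υ`. -/
def CaseN2 (ρ lam τ : ℝ) : Prop :=
  0 < lam ∧ 0 < τ ∧ τ < 1 ∧ Upsilon lam τ ≤ ρ

/-- `w` is the smallest negative root of `f_ρ` (i.e. `w = ϖ₁`). -/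
def IsMinNegRoot (ρ lam τ w : ℝ) : Prop :=
  w < 0 ∧ fRho ρ lam τ w = 0 ∧ ∀ t, t < 0 → fRho ρ lam τ t = 0 → w ≤ t

/-- `w` is the largest negative root of `f_ρ` (i.e. `w = ϖ₂`). -/
def IsMaxNegRoot (ρ lam τ w : ℝ) : Prop :=
  w < 0 ∧ fRho ρ lam τ w = 0 ∧ ∀ t, t < 0 → fRho ρ lam τ t = 0 → t ≤ w

/-- `Φ_{ϖ₂}(r)`: equal to `r^(-ϖ₂)` if `ρ > Υ` and to `r^(-ϖ₂) |log r|^(2/(1+τ))` if `ρ = Υ`. -/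
def Phi2 (ρ lam τ w2 r : ℝ) : ℝ :=
  if ρ = Upsilon lam τ then r ^ (-w2) * |Real.log r| ^ (2 / (1 + τ)) else r ^ (-w2)

/-- `Ψ_{ϖ₁}(t)`: equal to `t^(-ϖ₁)` if `ρ > Υ` and to `t^(-ϖ₁) (log t)^(2/(1+τ))` if `ρ = Υ`. -/
def Psi1 (ρ lam τ w1 t : ℝ) : ℝ :=
  if ρ = Upsilon lam τ then t ^ (-w1) * (Real.log t) ^ (2 / (1 + τ)) else t ^ (-w1)

/-- The radial operator `L_{ρ,λ,τ}[P](r) = P'' + (1-2ρ) P'/r + λ P^τ |P'|^(1-τ)/r^(1+τ)`. -/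
def Lrad (ρ lam τ : ℝ) (P : ℝ → ℝ) (r : ℝ) : ℝ :=
  deriv (deriv P) r + (1 - 2 * ρ) * deriv P r / r
    + lam * P r ^ τ * |deriv P r| ^ (1 - τ) / r ^ (1 + τ)

/-- The Laplacian of `u` at `x`, as the trace of the second derivative. -/
def lapl {N : ℕ} (u : EuclideanSpace ℝ (Fin N) → ℝ) (x : EuclideanSpace ℝ (Fin N)) : ℝ :=
  ∑ i : Fin N, iteratedFDeriv ℝ 2 u x ![EuclideanSpace.single i 1, EuclideanSpace.single i 1]

theorem one_sub_mul_le_one_add_rpow_neg {s p : ℝ} (hs : -1 < s) (hp0 : 0 ≤ p) (hp1 : p ≤ 1) :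
    1 - p * s ≤ (1 + s) ^ (-p) := by
  have hbase : 0 < 1 + s := by linarith
  have hpos : 0 < (1 + s) ^ p := rpow_pos_of_pos hbase p
  have hle : (1 + s) ^ p ≤ 1 + p * s := rpow_one_add_le_one_add_mul_self hs.le hp0 hp1
  rw [rpow_neg hbase.le, ← one_div, le_div_iff₀ hpos]
  rcases le_or_gt (1 - p * s) 0 with h | h
  · nlinarith
  · nlinarith [mul_le_mul_of_nonneg_left hle h.le, sq_nonneg (p * s)]

theorem one_sub_rpow_le_taylor_two {α x : ℝ} (hα0 : 0 ≤ α) (hα1 : α ≤ 1) (hx0 : 0 ≤ x)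
    (hx1 : x ≤ 1) : (1 - x) ^ α ≤ 1 - α * x - α * (1 - α) / 2 * x ^ 2 := by
  set g : ℝ → ℝ := fun y => 1 - α * y - α * (1 - α) / 2 * y ^ 2 - (1 - y) ^ α with hg
  have hg' : ∀ y < 1, HasDerivAt g (α * ((1 - y) ^ (α - 1) - (1 + (1 - α) * y))) y := by
    intro y hy
    refine ((((hasDerivAt_id y).const_mul α).const_sub 1).sub
      ((hasDerivAt_pow 2 y).const_mul (α * (1 - α) / 2)) |>.sub
      (((hasDerivAt_id y).const_sub 1).rpow_const (p := α) (Or.inl ?_))).congr_deriv ?_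
    · simp only [id]
      linarith
    · simp only [id]
      ring
  have hg'_nonneg : ∀ y ∈ Set.Ico (0 : ℝ) 1, 0 ≤ α * ((1 - y) ^ (α - 1) - (1 + (1 - α) * y)) := by
    rintro y ⟨hy0, hy1⟩
    have := one_sub_mul_le_one_add_rpow_neg (s := -y) (p := 1 - α) (by linarith) (by linarith)
      (by linarith)
    rw [neg_sub, ← sub_eq_add_neg] at this
    exact mul_nonneg hα0 (by linarith)
  have hg_cont : Continuous g := by
    have : Continuous fun y : ℝ => (1 - y) ^ α :=
      (continuous_const.sub continuous_id).rpow_const fun _ => Or.inr hα0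
    fun_prop
  have hmono : MonotoneOn g (Set.Icc 0 x) := by
    refine monotoneOn_of_hasDerivWithinAt_nonneg (convex_Icc 0 x) hg_cont.continuousOn
      (f' := fun y => α * ((1 - y) ^ (α - 1) - (1 + (1 - α) * y)))
      (fun y hy => ?_) (fun y hy => ?_)
    all_goals rw [interior_Icc] at hy
    · exact (hg' y (by linarith [hy.2])).hasDerivWithinAt
    · exact hg'_nonneg y ⟨hy.1.le, by linarith [hy.2]⟩
  have := hmono (Set.left_mem_Icc.2 hx0) (Set.right_mem_Icc.2 hx0) hx0
  simp only [hg] at this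
  norm_num at this
  linarith

section NegLogWeight

variable {s : ℝ}

theorem hasDerivAt_rpow_mul_neg_log_rpow (a b : ℝ) (hs0 : 0 < s) (hs1 : s ≠ 1) :
    HasDerivAt (fun t => t ^ a * (-log t) ^ b)
      (s ^ (a - 1) * (-log s) ^ (b - 1) * (a * -log s - b)) s := by
  have hL : -log s ≠ 0 := neg_ne_zero.2 (log_ne_zero_of_pos_of_ne_one hs0 hs1)
  refine ((hasDerivAt_rpow_const (Or.inl hs0.ne')).mul
    ((hasDerivAt_log hs0.ne').neg.rpow_const (p := b) (Or.inl hL))).congr_deriv ?_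
  simp only [Pi.neg_apply]
  rw [show s ^ a = s ^ (a - 1) * s by rw [← rpow_add_one hs0.ne']; ring_nf,
    show (-log s) ^ b = (-log s) ^ (b - 1) * -log s by rw [← rpow_add_one hL]; ring_nf]
  field_simp
  ring

theorem deriv_deriv_rpow_mul_neg_log_rpow (a b : ℝ) (hs0 : 0 < s) (hs1 : s ≠ 1) :
    deriv (deriv fun t => t ^ a * (-log t) ^ b) s = s ^ (a - 2) * (-log s) ^ (b - 2) *
      (a * (a - 1) * (-log s) ^ 2 - b * (2 * a - 1) * -log s + b * (b - 1)) := by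
  have hL : -log s ≠ 0 := neg_ne_zero.2 (log_ne_zero_of_pos_of_ne_one hs0 hs1)
  have hderiv : deriv (fun t => t ^ a * (-log t) ^ b) =ᶠ[𝓝 s]
      fun t => t ^ (a - 1) * (-log t) ^ (b - 1) * (a * -log t - b) :=
    eventually_of_mem ((isOpen_Ioi.inter isOpen_ne).mem_nhds ⟨hs0, hs1⟩)
      fun t ht => (hasDerivAt_rpow_mul_neg_log_rpow a b ht.1 ht.2).deriv
  rw [hderiv.deriv_eq]
  refine (((hasDerivAt_rpow_mul_neg_log_rpow (a - 1) (b - 1) hs0 hs1).mul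
    (((hasDerivAt_log hs0.ne').neg.const_mul a).sub_const b)).deriv).trans ?_
  simp only [Pi.neg_apply]
  rw [show a - 1 - 1 = a - 2 by ring, show b - 1 - 1 = b - 2 by ring,
    show s ^ (a - 1) = s ^ (a - 2) * s by rw [← rpow_add_one hs0.ne']; ring_nf,
    show (-log s) ^ (b - 1) = (-log s) ^ (b - 2) * -log s by rw [← rpow_add_one hL]; ring_nf]
  field_simp
  ring

end NegLogWeight

theorem Lrad_rpow_mul_neg_log_rpow (ρ lam τ m β : ℝ) {r : ℝ} (hr0 : 0 < r) (hr1 : r < 1)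
    (hβ : β ≤ m * -log r) :
    Lrad ρ lam τ (fun t => t ^ m * (-log t) ^ β) r = r ^ (m - 2) * (-log r) ^ (β - 2) *
      (m * (m - 1) * (-log r) ^ 2 - β * (2 * m - 1) * -log r + β * (β - 1)
        + (1 - 2 * ρ) * -log r * (m * -log r - β)
        + lam * (-log r) ^ (1 + τ) * (m * -log r - β) ^ (1 - τ)) := by
  have hA : 0 < -log r := neg_pos.2 (log_neg hr0 hr1)
  have hgap : 0 ≤ m * -log r - β := sub_nonneg.2 hβ
  simp only [Lrad]
  rw [deriv_deriv_rpow_mul_neg_log_rpow m β hr0 hr1.ne,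
    (hasDerivAt_rpow_mul_neg_log_rpow m β hr0 hr1.ne).deriv, abs_of_nonneg (by positivity)]
  set A := -log r
  have hlin : (1 - 2 * ρ) * (r ^ (m - 1) * A ^ (β - 1) * (m * A - β)) / r
      = (1 - 2 * ρ) * (r ^ (m - 2) * A ^ (β - 2) * (A * (m * A - β))) := by
    rw [show r ^ (m - 1) = r ^ (m - 2) * r by rw [← rpow_add_one hr0.ne']; ring_nf,
      show A ^ (β - 1) = A ^ (β - 2) * A by rw [← rpow_add_one hA.ne']; ring_nf]
    field_simp
  have hnonlin : lam * (r ^ m * A ^ β) ^ τ * (r ^ (m - 1) * A ^ (β - 1) * (m * A - β)) ^ (1 - τ)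
      / r ^ (1 + τ)
      = lam * (r ^ (m - 2) * A ^ (β - 2) * (A ^ (1 + τ) * (m * A - β) ^ (1 - τ))) := by
    have hr_exp : r ^ (m - 2) = r ^ (m * τ) * r ^ ((m - 1) * (1 - τ)) / r ^ (1 + τ) := by
      rw [← rpow_add hr0, ← rpow_sub hr0]; ring_nf
    have hA_exp : A ^ (β - 2) * A ^ (1 + τ) = A ^ (β * τ) * A ^ ((β - 1) * (1 - τ)) := by
      rw [← rpow_add hA, ← rpow_add hA]; ring_nf
    rw [mul_rpow (by positivity) (by positivity), mul_rpow (by positivity) hgap,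
      mul_rpow (by positivity) (by positivity), ← rpow_mul hr0.le, ← rpow_mul hA.le,
      ← rpow_mul hr0.le, ← rpow_mul hA.le, hr_exp]
    linear_combination
      -(lam * r ^ (m * τ) * r ^ ((m - 1) * (1 - τ)) / r ^ (1 + τ) * (m * A - β) ^ (1 - τ)) * hA_exp
  rw [hlin, hnonlin]
  ring

theorem Lrad_rpow_mul_neg_log_rpow_nonpos {lam τ m : ℝ} (hτ0 : 0 < τ) (hτ1 : τ ≤ 1)
    (hm : m ^ (τ + 1) = lam * τ) {r : ℝ} (hr0 : 0 < r) (hr1 : r < 1)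
    (hβ : 2 / (1 + τ) ≤ m * -log r) :
    Lrad ((τ + 1) / (2 * τ) * m) lam τ (fun t => t ^ m * (-log t) ^ (2 / (1 + τ))) r ≤ 0 := by
  rw [Lrad_rpow_mul_neg_log_rpow _ _ _ _ _ hr0 hr1 hβ]
  have hA : 0 < -log r := neg_pos.2 (log_neg hr0 hr1)
  set A := -log r
  set β := 2 / (1 + τ) with hβ_def
  have hmA : 0 < m * A := lt_of_lt_of_le (by positivity) hβ
  have hm0 : 0 < m := (pos_iff_pos_of_mul_pos hmA).2 hA
  set x := β / (m * A) with hx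
  have hx0 : 0 ≤ x := by positivity
  have hx1 : x ≤ 1 := (div_le_one hmA).2 hβ
  have hnonlin :
      lam * A ^ (1 + τ) * (m * A - β) ^ (1 - τ) = m ^ 2 / τ * A ^ 2 * (1 - x) ^ (1 - τ) := by
    have hm2 : m ^ (τ + 1) * m ^ (1 - τ) = m ^ 2 := by
      rw [← rpow_add hm0, show τ + 1 + (1 - τ) = (2 : ℝ) by ring, rpow_two]
    have hA2 : A ^ (1 + τ) * A ^ (1 - τ) = A ^ 2 := by
      rw [← rpow_add hA, show 1 + τ + (1 - τ) = (2 : ℝ) by ring, rpow_two]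
    rw [show m * A - β = m * A * (1 - x) by rw [hx]; field_simp,
      mul_rpow hmA.le (sub_nonneg.2 hx1), mul_rpow hm0.le hA.le,
      show lam = m ^ (τ + 1) / τ by rw [hm]; field_simp]
    linear_combination (1 - x) ^ (1 - τ) / τ * (A ^ (1 + τ) * A ^ (1 - τ) * hm2 + m ^ 2 * hA2)
  have htaylor := one_sub_rpow_le_taylor_two (α := 1 - τ) (by linarith) (by linarith) hx0 hx1
  have hcancel : m * (m - 1) * A ^ 2 - β * (2 * m - 1) * A + β * (β - 1)
      + (1 - 2 * ((τ + 1) / (2 * τ) * m)) * A * (m * A - β)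
      + m ^ 2 / τ * A ^ 2 * (1 - (1 - τ) * x - (1 - τ) * (1 - (1 - τ)) / 2 * x ^ 2) = 0 := by
    rw [hx, hβ_def]
    field_simp
    ring
  refine mul_nonpos_of_nonneg_of_nonpos (by positivity) ?_
  rw [hnonlin]
  linarith [mul_le_mul_of_nonneg_left htaylor (by positivity : 0 ≤ m ^ 2 / τ * A ^ 2)]

/-- For `λ > 0`, `τ ∈ (0,1)`, `ρ = Υ` and `ϖ₂ = -(λτ)^{1/(τ+1)}`, the
function `Φ(r) = r^{-ϖ₂} (log(1/r))^{2/(1+τ)}` satisfies, for some `r_* ∈ (0,1)` and all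
`r ∈ (0, r_*)`: `Φ'(r) > 0` and `L_{ρ,λ,τ}[Φ](r) ≤ 0`. -/
theorem stmt18_Phi_supersolution
    (lam τ ρ : ℝ) (hlam : 0 < lam) (hτ0 : 0 < τ) (hτ1 : τ < 1)
    (hρ : ρ = Upsilon lam τ)
    (w2 : ℝ) (hw2 : w2 = -((lam * τ) ^ (1 / (τ + 1)))) :
    ∃ rstar : ℝ, 0 < rstar ∧ rstar < 1 ∧
      ∀ r : ℝ, 0 < r → r < rstar →
        0 < deriv (fun s : ℝ => s ^ (-w2) * (Real.log (1 / s)) ^ (2 / (1 + τ))) r ∧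
        Lrad ρ lam τ (fun s : ℝ => s ^ (-w2) * (Real.log (1 / s)) ^ (2 / (1 + τ))) r ≤ 0 := by
  set m := (lam * τ) ^ (1 / (τ + 1)) with hm
  set β := 2 / (1 + τ)
  have hm0 : 0 < m := rpow_pos_of_pos (mul_pos hlam hτ0) _
  have hmτ : m ^ (τ + 1) = lam * τ := by
    rw [hm, ← rpow_mul (mul_pos hlam hτ0).le, one_div_mul_cancel (by linarith), rpow_one]
  have hΦ : (fun s : ℝ => s ^ (-w2) * log (1 / s) ^ β) = fun s => s ^ m * (-log s) ^ β := by
    simp only [hw2, neg_neg, one_div, log_inv]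
  have hβm : 0 < β / m := by positivity
  refine ⟨exp (-(β / m)), exp_pos _, exp_lt_one_iff.2 (neg_lt_zero.2 hβm), fun r hr0 hr => ?_⟩
  have hr1 : r < 1 := hr.trans (exp_lt_one_iff.2 (neg_lt_zero.2 hβm))
  have hβr : β < m * -log r := by
    have := (log_lt_iff_lt_exp hr0).2 hr
    rw [← div_lt_iff₀' hm0]
    linarith
  rw [hΦ, hρ]
  refine ⟨?_, Lrad_rpow_mul_neg_log_rpow_nonpos hτ0 hτ1.le hmτ hr0 hr1 hβr.le⟩
  rw [(hasDerivAt_rpow_mul_neg_log_rpow m β hr0 hr1.ne).deriv]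
  have hA : 0 < -log r := neg_pos.2 (log_neg hr0 hr1)
  exact mul_pos (by positivity) (sub_pos.2 hβr)

end
end

section
/- Assume λ > 0, τ ∈ (0,1) and ρ = Υ = ((τ+1)/(2τ))(λτ)^{1/(τ+1)}, and set ϖ1 = −(λτ)^{1/(τ+1)}. Define Ψ̃(r) = r^{−ϖ1}(log r)^{2/(1+τ)} + r^{−ϖ1} log r for r > 1. Then there exists R₁ > 1 such that L_{ρ,λ,τ}[Ψ̃](r) ≤ 0 for every r > R₁. -/
open MeasureTheory Filter Topology Real RealInnerProductSpace

noncomputable section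

/-! Write `Ψ̃(r) = r ^ m * g (log r)` with `m = (λτ)^(1/(τ+1))`, `g L = L ^ β + L`,
`β = 2/(1+τ)`. Then `L[Ψ̃](r) = r ^ (m-2) * LradProfile …`, an explicit expression in `g, g', g''`
at `log r`. For `ρ = Υ` its terms linear in `g, g'` cancel, and the cubic Taylor bound for
`(1 + x) ^ (1-τ)` at `x = g' / (m g)` leaves `g'' - (1-τ)/2 * g'^2/g + O(g'^3/g^2)`. For our `g`
the first two terms add up to `-(1-τ)/2 * (β(2-β) L^(β-1) + 1)/g ≈ -c/L`, which beats the
cubic error `O(L^(β-3))` because `β < 2`. -/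

open Set

lemma monotoneOn_Ici_of_hasDerivAt_nonneg {f f' : ℝ → ℝ}
    (hf : ∀ x, 0 ≤ x → HasDerivAt f (f' x) x) (hf' : ∀ x, 0 ≤ x → 0 ≤ f' x) :
    MonotoneOn f (Ici 0) := by
  refine monotoneOn_of_hasDerivWithinAt_nonneg (f' := f') (convex_Ici 0)
    (fun x hx => (hf x hx).continuousAt.continuousWithinAt) (fun x hx => ?_) (fun x hx => ?_)
  all_goals rw [interior_Ici] at hx
  exacts [(hf x (le_of_lt hx)).hasDerivWithinAt, hf' x (le_of_lt hx)]

lemma hasDerivAt_one_add_rpow (q : ℝ) {x : ℝ} (hx : 0 ≤ x) :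
    HasDerivAt (fun y => (1 + y) ^ q) (q * (1 + x) ^ (q - 1)) x := by
  simpa using ((hasDerivAt_id x).const_add 1).rpow_const (p := q) (Or.inl (by positivity))

lemma one_add_mul_le_one_add_rpow_of_nonpos {q x : ℝ} (hq : q ≤ 0) (hx : 0 ≤ x) :
    1 + q * x ≤ (1 + x) ^ q := by
  have hmono : MonotoneOn (fun y => (1 + y) ^ q - q * y) (Ici 0) := by
    refine monotoneOn_Ici_of_hasDerivAt_nonneg
      (fun y hy => (hasDerivAt_one_add_rpow q hy).sub ((hasDerivAt_id y).const_mul q))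
      fun y hy => ?_
    have : (1 + y) ^ (q - 1) ≤ 1 := rpow_le_one_of_one_le_of_nonpos (by linarith) (by linarith)
    simp only [mul_one]
    nlinarith
  have := hmono self_mem_Ici hx hx
  simp only [add_zero, one_rpow, mul_zero, sub_zero] at this
  linarith

lemma one_add_rpow_le_quadratic_of_nonpos {q x : ℝ} (hq : q ≤ 0) (hx : 0 ≤ x) :
    (1 + x) ^ q ≤ 1 + q * x + q * (q - 1) / 2 * x ^ 2 := by
  have hmono : MonotoneOn (fun y => q * y + q * (q - 1) / 2 * y ^ 2 - (1 + y) ^ q) (Ici 0) := by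
    refine monotoneOn_Ici_of_hasDerivAt_nonneg
      (fun y hy => (((hasDerivAt_id y).const_mul q).add ((hasDerivAt_pow 2 y).const_mul _)).sub
        (hasDerivAt_one_add_rpow q hy)) fun y hy => ?_
    have := one_add_mul_le_one_add_rpow_of_nonpos (by linarith : q - 1 ≤ 0) hy
    simp only [Nat.cast_ofNat, mul_one]
    nlinarith
  have := hmono self_mem_Ici hx hx
  norm_num at this
  linarith

lemma one_add_rpow_le_cubic {p x : ℝ} (hp0 : 0 ≤ p) (hp1 : p ≤ 1) (hx : 0 ≤ x) :
    (1 + x) ^ p ≤ 1 + p * x + p * (p - 1) / 2 * x ^ 2 + p * (p - 1) * (p - 2) / 6 * x ^ 3 := by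
  have hmono : MonotoneOn (fun y => p * y + p * (p - 1) / 2 * y ^ 2
      + p * (p - 1) * (p - 2) / 6 * y ^ 3 - (1 + y) ^ p) (Ici 0) := by
    refine monotoneOn_Ici_of_hasDerivAt_nonneg
      (fun y hy => ((((hasDerivAt_id y).const_mul p).add ((hasDerivAt_pow 2 y).const_mul _)).add
        ((hasDerivAt_pow 3 y).const_mul _)).sub (hasDerivAt_one_add_rpow p hy)) fun y hy => ?_
    have := one_add_rpow_le_quadratic_of_nonpos (by linarith : p - 1 ≤ 0) hy
    simp only [Nat.cast_ofNat, mul_one]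
    nlinarith
  have := hmono self_mem_Ici hx hx
  norm_num at this
  linarith

lemma hasDerivAt_rpow_mul_comp_log {m s g' : ℝ} {g : ℝ → ℝ} (hs : 0 < s)
    (hg : HasDerivAt g g' (log s)) :
    HasDerivAt (fun t => t ^ m * g (log t)) (s ^ (m - 1) * (m * g (log s) + g')) s := by
  refine ((hasDerivAt_rpow_const (p := m) (Or.inl hs.ne')).mul
    (hg.comp s (hasDerivAt_log hs.ne'))).congr_deriv ?_
  rw [Function.comp_apply, rpow_sub_one hs.ne']
  field_simp

def LradProfile (ρ lam τ m b b' b'' : ℝ) : ℝ :=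
  (m - 1) * (m * b + b') + (m * b' + b'') + (1 - 2 * ρ) * (m * b + b')
    + lam * b ^ τ * (m * b + b') ^ (1 - τ)

lemma Lrad_rpow_mul_comp_log {ρ lam τ m r : ℝ} {g g' g'' : ℝ → ℝ} (hr : 0 < r)
    (hg : ∀ᶠ L in 𝓝 (log r), HasDerivAt g (g' L) L)
    (hg' : HasDerivAt g' (g'' (log r)) (log r))
    (hb : 0 ≤ g (log r)) (hA : 0 ≤ m * g (log r) + g' (log r)) :
    Lrad ρ lam τ (fun s => s ^ m * g (log s)) r
      = r ^ (m - 2) * LradProfile ρ lam τ m (g (log r)) (g' (log r)) (g'' (log r)) := by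
  have hderiv : ∀ᶠ s in 𝓝 r, HasDerivAt (fun t => t ^ m * g (log t))
      (s ^ (m - 1) * (m * g (log s) + g' (log s))) s := by
    filter_upwards [(continuousAt_log hr.ne').eventually hg, eventually_gt_nhds hr] with s hs hs0
    exact hasDerivAt_rpow_mul_comp_log hs0 hs
  have hderiv2 : HasDerivAt (fun s => s ^ (m - 1) * (m * g (log s) + g' (log s)))
      (r ^ (m - 2) * ((m - 1) * (m * g (log r) + g' (log r))
        + (m * g' (log r) + g'' (log r)))) r := by
    have := hasDerivAt_rpow_mul_comp_log (m := m - 1) (g := fun L => m * g L + g' L) hr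
      ((hg.self_of_nhds.const_mul m).add hg')
    convert this using 2
    ring_nf
  rw [Lrad, hderiv.self_of_nhds.deriv,
    Filter.EventuallyEq.deriv_eq (hderiv.mono fun s hs => hs.deriv), hderiv2.deriv, LradProfile]
  generalize g (log r) = b at *
  generalize m * b + g' (log r) = A at *
  have hr1 : r ^ (m - 1) = r ^ (m - 2) * r := by
    rw [← rpow_add_one hr.ne']; ring_nf
  have hlin : (1 - 2 * ρ) * (r ^ (m - 1) * A) / r = r ^ (m - 2) * ((1 - 2 * ρ) * A) := by
    rw [hr1]; field_simp
  have hnonlin : lam * (r ^ m * b) ^ τ * |r ^ (m - 1) * A| ^ (1 - τ) / r ^ (1 + τ)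
      = r ^ (m - 2) * (lam * b ^ τ * A ^ (1 - τ)) := by
    have hpow : (r ^ m) ^ τ * (r ^ (m - 1)) ^ (1 - τ) = r ^ (m - 2) * r ^ (1 + τ) := by
      rw [← rpow_mul hr.le, ← rpow_mul hr.le, ← rpow_add hr, ← rpow_add hr]
      ring_nf
    rw [abs_of_nonneg (by positivity), mul_rpow (by positivity) hb, mul_rpow (by positivity) hA]
    calc _ = (r ^ m) ^ τ * (r ^ (m - 1)) ^ (1 - τ) * (lam * b ^ τ * A ^ (1 - τ))
          / r ^ (1 + τ) := by ring
      _ = _ := by rw [hpow]; field_simp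
  rw [hlin, hnonlin]
  ring

lemma LradProfile_le {ρ lam τ m b b' b'' : ℝ} (hτ0 : 0 < τ) (hτ1 : τ < 1) (hm0 : 0 < m)
    (hm : m ^ (τ + 1) = lam * τ) (hρ : 2 * ρ = (τ + 1) / τ * m) (hb : 0 < b) (hb' : 0 ≤ b') :
    LradProfile ρ lam τ m b b' b''
      ≤ b'' - (1 - τ) / 2 * b' ^ 2 / b + (1 - τ) * (1 + τ) / (6 * m) * b' ^ 3 / b ^ 2 := by
  set x := b' / (m * b) with hx
  have hx0 : 0 ≤ x := by positivity
  have hA : m * b + b' = m * b * (1 + x) := by rw [hx]; field_simp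
  have hlam : lam * m ^ (1 - τ) = m ^ 2 / τ := by
    have hsq : m ^ (τ + 1) * m ^ (1 - τ) = m ^ 2 := by
      rw [← rpow_add hm0, show τ + 1 + (1 - τ) = 2 by ring, rpow_two]
    rw [eq_div_iff hτ0.ne']
    linear_combination hsq - m ^ (1 - τ) * hm
  have hnonlin : lam * b ^ τ * (m * b + b') ^ (1 - τ) = m ^ 2 / τ * b * (1 + x) ^ (1 - τ) := by
    have hbb : b ^ τ * b ^ (1 - τ) = b := by rw [← rpow_add hb]; simp
    rw [hA, mul_rpow (by positivity) (by positivity), mul_rpow hm0.le hb.le, ← hlam]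
    linear_combination lam * m ^ (1 - τ) * (1 + x) ^ (1 - τ) * hbb
  have hcubic := one_add_rpow_le_cubic (p := 1 - τ) (by linarith) (by linarith) hx0
  rw [LradProfile, hnonlin]
  calc _ ≤ (m - 1) * (m * b + b') + (m * b' + b'') + (1 - 2 * ρ) * (m * b + b')
        + m ^ 2 / τ * b * (1 + (1 - τ) * x + (1 - τ) * (1 - τ - 1) / 2 * x ^ 2
          + (1 - τ) * (1 - τ - 1) * (1 - τ - 2) / 6 * x ^ 3) := by gcongr
    _ = _ := by
      rw [hρ, hx]
      field_simp
      ring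

lemma eventually_profile_remainder_nonpos {β : ℝ} (c : ℝ) (hβ1 : 1 < β) (hβ2 : β < 2) :
    ∀ᶠ L in atTop, β * (β - 1) * L ^ (β - 2)
      - (β - 1) / β * (β * L ^ (β - 1) + 1) ^ 2 / (L ^ β + L)
      + c * (β * L ^ (β - 1) + 1) ^ 3 / (L ^ β + L) ^ 2 ≤ 0 := by
  have hsmall : ∀ᶠ L in atTop, c * (β + 1) ^ 3 * L ^ (β - 2) ≤ (β - 1) * (2 - β) := by
    have hlim := (tendsto_rpow_neg_atTop (by linarith : 0 < 2 - β)).const_mul (c * (β + 1) ^ 3)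
    rw [mul_zero] at hlim
    filter_upwards [hlim.eventually (ge_mem_nhds (by nlinarith : 0 < (β - 1) * (2 - β)))]
      with L hL
    rwa [neg_sub] at hL
  filter_upwards [hsmall, eventually_ge_atTop 1] with L hsmall hL1
  have hL0 : 0 < L := by linarith
  set u := L ^ (β - 1) with hu
  have hu1 : 1 ≤ u := one_le_rpow hL1 (by linarith)
  have hLβ : L ^ β = L * u := by
    rw [hu, ← rpow_one_add' hL0.le (by linarith)]
    ring_nf
  have hLβ2 : L ^ (β - 2) = u / L := by
    rw [hu, ← rpow_sub_one hL0.ne']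
    ring_nf
  have hcu : c * (β + 1) ^ 3 * u ≤ (β - 1) * (2 - β) * L := by
    rw [hLβ2] at hsmall
    rwa [mul_div_assoc', div_le_iff₀ hL0] at hsmall
  have key : c * β * (β * u + 1) ^ 3 ≤ (β - 1) * L * (u + 1) * (β * (2 - β) * u + 1) := by
    have : 0 ≤ β * (2 - β) := by nlinarith
    have : 0 ≤ β - 1 := by linarith
    rcases le_or_gt c 0 with hc | hc
    · have : c * β * (β * u + 1) ^ 3 ≤ 0 :=
        mul_nonpos_of_nonpos_of_nonneg (mul_nonpos_of_nonpos_of_nonneg hc (by linarith))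
          (by positivity)
      have : 0 ≤ (β - 1) * L * (u + 1) * (β * (2 - β) * u + 1) := by positivity
      linarith
    · have : 0 ≤ (β - 1) * L * (β * (2 - β) * u + u + 1) := by positivity
      calc c * β * (β * u + 1) ^ 3 ≤ c * β * ((β + 1) * u) ^ 3 := by gcongr; nlinarith
        _ = β * u ^ 2 * (c * (β + 1) ^ 3 * u) := by ring
        _ ≤ β * u ^ 2 * ((β - 1) * (2 - β) * L) := by gcongr
        _ ≤ _ := by nlinarith
  rw [hLβ, hLβ2]
  have hexpr : β * (β - 1) * (u / L) - (β - 1) / β * (β * u + 1) ^ 2 / (L * u + L)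
      + c * (β * u + 1) ^ 3 / (L * u + L) ^ 2
      = (c * β * (β * u + 1) ^ 3 - (β - 1) * L * (u + 1) * (β * (2 - β) * u + 1))
        / (β * L ^ 2 * (u + 1) ^ 2) := by
    field_simp
    ring
  rw [hexpr]
  exact div_nonpos_of_nonpos_of_nonneg (by linarith) (by positivity)

/-- For `λ > 0`, `τ ∈ (0,1)`, `ρ = Υ` and `ϖ₁ = -(λτ)^{1/(τ+1)}`, the
function `Ψ̃(r) = r^{-ϖ₁} (log r)^{2/(1+τ)} + r^{-ϖ₁} log r` satisfies, for some `R₁ > 1`,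
`L_{ρ,λ,τ}[Ψ̃](r) ≤ 0` for every `r > R₁`. -/
theorem stmt19_Psi_supersolution
    (lam τ ρ : ℝ) (hlam : 0 < lam) (hτ0 : 0 < τ) (hτ1 : τ < 1)
    (hρ : ρ = Upsilon lam τ)
    (w1 : ℝ) (hw1 : w1 = -((lam * τ) ^ (1 / (τ + 1)))) :
    ∃ R1 : ℝ, 1 < R1 ∧
      ∀ r : ℝ, R1 < r →
        Lrad ρ lam τ
          (fun s : ℝ => s ^ (-w1) * (Real.log s) ^ (2 / (1 + τ)) + s ^ (-w1) * Real.log s)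
          r ≤ 0 := by
  subst hw1
  set m := (lam * τ) ^ (1 / (τ + 1)) with hm
  set β := 2 / (1 + τ) with hβ
  have hm0 : 0 < m := by positivity
  have hmτ : m ^ (τ + 1) = lam * τ := by
    rw [hm, ← rpow_mul (by positivity), one_div_mul_cancel (by linarith), rpow_one]
  have hρm : 2 * ρ = (τ + 1) / τ * m := by rw [hρ, Upsilon, ← hm]; field_simp
  have hβ1 : 1 < β := by rw [hβ, lt_div_iff₀ (by linarith)]; linarith
  have hβ2 : β < 2 := by rw [hβ, div_lt_iff₀ (by linarith)]; linarith
  have hτβ : (1 - τ) / 2 = (β - 1) / β := by rw [hβ]; field_simp; ring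
  obtain ⟨R, hR⟩ := eventually_atTop.1 (tendsto_log_atTop.eventually
    ((eventually_profile_remainder_nonpos ((1 - τ) * (1 + τ) / (6 * m)) hβ1 hβ2).and
      (eventually_gt_atTop 0)))
  refine ⟨max R 2, by simp, fun r hr => ?_⟩
  obtain ⟨hrem, hlog⟩ := hR r (le_of_lt (lt_of_le_of_lt (le_max_left _ _) hr))
  have hr0 : 0 < r := by linarith [le_max_right R 2]
  have hg : ∀ L, HasDerivAt (fun L => L ^ β + L) (β * L ^ (β - 1) + 1) L := fun L =>
    (hasDerivAt_rpow_const (Or.inr hβ1.le)).add (hasDerivAt_id L)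
  have hg' : HasDerivAt (fun L => β * L ^ (β - 1) + 1) (β * (β - 1) * log r ^ (β - 2))
      (log r) := by
    refine (((hasDerivAt_rpow_const (p := β - 1) (Or.inl hlog.ne')).const_mul β).add_const
      1).congr_deriv ?_
    rw [sub_sub, one_add_one_eq_two, mul_assoc]
  rw [neg_neg, show (fun s => s ^ m * log s ^ β + s ^ m * log s)
      = fun s => s ^ m * (fun L => L ^ β + L) (log s) by funext; ring,
    Lrad_rpow_mul_comp_log (g'' := fun L => β * (β - 1) * L ^ (β - 2)) hr0
      (.of_forall hg) hg' (by positivity) (by positivity)]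
  refine mul_nonpos_of_nonneg_of_nonpos (by positivity)
    ((LradProfile_le hτ0 hτ1 hm0 hmτ hρm (by positivity) (by positivity)).trans ?_)
  rwa [hτβ]
end
end
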